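/- arXiv:0907.4422 — 6 statements merged into one kernel-verified Lean document; each statement's English description precedes it below -/
import Mathlib

section
/- Let φ : X → Y be a map of topological spaces with open covers {U_α} of X and {V_α} of Y (same index set) such that for all α, α' the map φ restricts to a homeomorphism of U_α ∩ U_{α'} onto V_α ∩ V_{α'}. Then φ is injective. -/
/-! If `φ x = φ x'` with `x ∈ U α` and `x' ∈ U α'`, this common value lies in `V α ∩ V α'`, so it
is `φ z` for some `z ∈ U α ∩ U α'`; injectivity of `φ` on `U α` and on `U α'` gives `x = z = x'`. -/

open Set Function

theorem Equiv.bijOn_of_coe_apply {α β : Type*} {s : Set α} {t : Set β} {f : α → β} (e : s ≃ t)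
    (he : ∀ x : s, (e x : β) = f x) : BijOn f s t := by
  refine ⟨fun x hx => he ⟨x, hx⟩ ▸ (e ⟨x, hx⟩).2, fun x hx y hy hxy => ?_, fun y hy => ?_⟩
  · have hexy : e ⟨x, hx⟩ = e ⟨y, hy⟩ := Subtype.ext (by rw [he, he, hxy])
    exact congrArg Subtype.val (e.injective hexy)
  · obtain ⟨x, hx⟩ := e.surjective ⟨y, hy⟩
    exact ⟨x, x.2, by rw [← he, hx]⟩

theorem Function.injective_of_surjOn_inter {X Y I : Type*} {φ : X → Y} {U : I → Set X}
    {V : I → Set Y} (hcover : ⋃ α, U α = univ) (hmaps : ∀ α, MapsTo φ (U α) (V α))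
    (hinj : ∀ α, InjOn φ (U α)) (hsurj : ∀ α α', SurjOn φ (U α ∩ U α') (V α ∩ V α')) :
    Injective φ := by
  intro x x' hxx'
  obtain ⟨α, hx⟩ := mem_iUnion.1 (hcover ▸ mem_univ x)
  obtain ⟨α', hx'⟩ := mem_iUnion.1 (hcover ▸ mem_univ x')
  obtain ⟨z, ⟨hzα, hzα'⟩, hz⟩ := hsurj α α' ⟨hmaps α hx, hxx' ▸ hmaps α' hx'⟩
  exact (hinj α hx hzα hz.symm).trans (hinj α' hx' hzα' (hxx'.symm.trans hz.symm)).symm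

theorem stmt1_general {X Y : Type*} [TopologicalSpace X] [TopologicalSpace Y]
    {I : Type*} (φ : X → Y) (U : I → Set X) (V : I → Set Y)
    (hUcover : ⋃ α, U α = Set.univ)
    (h : ∀ α α', ∃ e : (U α ∩ U α' : Set X) ≃ₜ (V α ∩ V α' : Set Y),
        ∀ x : (U α ∩ U α' : Set X), (e x : Y) = φ x) :
    Function.Injective φ := by
  have hbij : ∀ α α', BijOn φ (U α ∩ U α') (V α ∩ V α') := fun α α' =>
    let ⟨e, he⟩ := h α α'
    e.toEquiv.bijOn_of_coe_apply he
  refine injective_of_surjOn_inter hUcover (fun α => ?_) (fun α => ?_)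
    (fun α α' => (hbij α α').surjOn)
  · simpa only [inter_self] using (hbij α α).mapsTo
  · simpa only [inter_self] using (hbij α α).injOn

/-- If `φ : X → Y` and there are open covers `U` of `X` and `V` of `Y`, indexed by the same
set, such that for every pair of indices `α, α'`, `φ` restricts to a homeomorphism of
`U α ∩ U α'` onto `V α ∩ V α'`, then `φ` is a homeomorphism. -/
theorem stmt1 {X Y : Type*} [TopologicalSpace X] [TopologicalSpace Y]
    {I : Type*} (φ : X → Y) (U : I → Set X) (V : I → Set Y)
    (hUopen : ∀ α, IsOpen (U α)) (hVopen : ∀ α, IsOpen (V α))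
    (hUcover : ⋃ α, U α = Set.univ) (hVcover : ⋃ α, V α = Set.univ)
    (h : ∀ α α', ∃ e : (U α ∩ U α' : Set X) ≃ₜ (V α ∩ V α' : Set Y),
        ∀ x : (U α ∩ U α' : Set X), (e x : Y) = φ x) :
    Function.Injective φ :=
  stmt1_general φ U V hUcover h
end

section
/- In a Keigher differential ring A, an element a belongs to every prime differential ideal of A if and only if a is nilpotent. -/
/-- An ideal is a differential ideal w.r.t. a family of derivation maps `d`. -/
def IsDiffIdeal {A : Type*} [CommRing A] {k : ℕ} (d : Fin k → A → A) (I : Ideal A) : Prop :=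
  ∀ i : Fin k, ∀ x ∈ I, d i x ∈ I

/-- The differential spectrum: prime differential ideals, with the Kolchin topology
(the subspace topology induced from the Zariski topology on `PrimeSpectrum`). -/
abbrev DiffSpec {A : Type*} [CommRing A] {k : ℕ} (d : Fin k → A → A) :=
  {p : PrimeSpectrum A // IsDiffIdeal d p.asIdeal}

/-- A Keigher ring: the radical of every differential ideal is differential. -/
def IsKeigher {A : Type*} [CommRing A] {k : ℕ} (d : Fin k → A → A) : Prop :=
  ∀ I : Ideal A, IsDiffIdeal d I → IsDiffIdeal d I.radical

/-- `radDiffGen d E` is the smallest radical differential ideal containing `E`. -/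
def radDiffGen {A : Type*} [CommRing A] {k : ℕ} (d : Fin k → A → A) (E : Set A) : Ideal A :=
  sInf {I : Ideal A | E ⊆ I ∧ I.IsRadical ∧ IsDiffIdeal d I}

/-!
Take an ideal `P` maximal among the differential ideals containing no power of `a` (Zorn). By the
Keigher property its radical is again such an ideal, so `P` is radical. For a radical differential
ideal `P`, every colon ideal `P : b` is again a radical differential ideal containing `P`; applying
maximality to `P : y` and then to `P : aᵐ` shows that `P` is prime. Hence if `a` is not
nilpotent it misses some prime differential ideal.
-/

section DiffIdeal

variable {A : Type*} [CommRing A] {k : ℕ}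

theorem isDiffIdeal_bot {R : Type*} [CommSemiring R] [Algebra R A]
    (δ : Fin k → Derivation R A A) : IsDiffIdeal (fun i => ⇑(δ i)) ⊥ := by
  intro i x hx
  rw [Ideal.mem_bot] at hx ⊢
  simp [hx]

theorem IsDiffIdeal.sSup_of_directedOn {d : Fin k → A → A} {c : Set (Ideal A)}
    (hne : c.Nonempty) (hdir : DirectedOn (· ≤ ·) c) (hc : ∀ I ∈ c, IsDiffIdeal d I) :
    IsDiffIdeal d (sSup c) := by
  intro i x hx
  obtain ⟨I, hIc, hxI⟩ := (Submodule.mem_sSup_of_directed hne hdir).1 hx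
  exact le_sSup hIc (hc I hIc i x hxI)

theorem Ideal.IsRadical.colon_singleton {I : Ideal A} (hI : I.IsRadical) (b : A) :
    (I.colon {b}).IsRadical := by
  rintro x ⟨n, hn⟩
  rw [Submodule.mem_colon_singleton, smul_eq_mul] at hn ⊢
  refine hI ⟨n + 1, ?_⟩
  rw [show (x * b) ^ (n + 1) = x ^ n * b * (x * b ^ n) by ring]
  exact I.mul_mem_right _ hn

theorem Ideal.IsRadical.derivation_mul_mem {R : Type*} [CommSemiring R] [Algebra R A]
    {I : Ideal A} (hI : I.IsRadical) (D : Derivation R A A) {x b : A} (hxb : x * b ∈ I)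
    (hD : D (x * b) ∈ I) : D x * b ∈ I := by
  refine hI ⟨2, ?_⟩
  have key : (D x * b) ^ 2 = D x * b * D (x * b) - D x * D b * (x * b) := by
    rw [Derivation.leibniz, smul_eq_mul, smul_eq_mul]
    ring
  rw [key]
  exact I.sub_mem (I.mul_mem_left _ hD) (I.mul_mem_left _ hxb)

theorem IsDiffIdeal.colon_singleton {R : Type*} [CommSemiring R] [Algebra R A]
    {δ : Fin k → Derivation R A A} {I : Ideal A} (hI : I.IsRadical)
    (hd : IsDiffIdeal (fun i => ⇑(δ i)) I) (b : A) :
    IsDiffIdeal (fun i => ⇑(δ i)) (I.colon {b}) := by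
  intro i x hx
  rw [Submodule.mem_colon_singleton, smul_eq_mul] at hx ⊢
  exact hI.derivation_mul_mem (δ i) hx (hd i _ hx)

end DiffIdeal

section MaximalAvoidingPowers

variable {A : Type*} [CommRing A] {k : ℕ}

theorem exists_maximal_isDiffIdeal_forall_pow_notMem {R : Type*} [CommSemiring R] [Algebra R A]
    (δ : Fin k → Derivation R A A) {a : A} (ha : ¬IsNilpotent a) :
    ∃ P : Ideal A, Maximal (fun I => IsDiffIdeal (fun i => ⇑(δ i)) I ∧ ∀ n, a ^ n ∉ I) P := by
  set S := {I : Ideal A | IsDiffIdeal (fun i => ⇑(δ i)) I ∧ ∀ n, a ^ n ∉ I}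
  have hchain : ∀ c ⊆ S, IsChain (· ≤ ·) c → ∀ J ∈ c, ∃ ub ∈ S, ∀ I ∈ c, I ≤ ub := by
    intro c hcS hc J hJ
    have hdir := hc.directedOn
    refine ⟨sSup c, ⟨.sSup_of_directedOn ⟨J, hJ⟩ hdir fun I hI => (hcS hI).1, fun n hn => ?_⟩,
      fun I hI => le_sSup hI⟩
    obtain ⟨I, hIc, hnI⟩ := (Submodule.mem_sSup_of_directed ⟨J, hJ⟩ hdir).1 hn
    exact (hcS hIc).2 n hnI
  have hbot : ⊥ ∈ S := ⟨isDiffIdeal_bot δ, fun n hn => ha ⟨n, Ideal.mem_bot.1 hn⟩⟩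
  obtain ⟨P, -, hP⟩ := zorn_le_nonempty₀ S hchain ⊥ hbot
  exact ⟨P, hP⟩

variable {d : Fin k → A → A} {a : A} {P : Ideal A}

theorem IsKeigher.isRadical_of_maximal (hK : IsKeigher d)
    (hP : Maximal (fun I => IsDiffIdeal d I ∧ ∀ n, a ^ n ∉ I) P) : P.IsRadical := by
  have hrad : IsDiffIdeal d P.radical ∧ ∀ n, a ^ n ∉ P.radical := by
    refine ⟨hK P hP.1.1, fun n ⟨m, hm⟩ => hP.1.2 (n * m) ?_⟩
    rwa [pow_mul]
  exact hP.2 hrad P.le_radical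

variable {R : Type*} [CommSemiring R] [Algebra R A] {δ : Fin k → Derivation R A A}

theorem exists_pow_mul_mem_of_maximal
    (hP : Maximal (fun I => IsDiffIdeal (fun i => ⇑(δ i)) I ∧ ∀ n, a ^ n ∉ I) P)
    (hrad : P.IsRadical) {b c : A} (hcb : c * b ∈ P) (hc : c ∉ P) : ∃ m, a ^ m * b ∈ P := by
  by_contra! h
  have hcolon : IsDiffIdeal (fun i => ⇑(δ i)) (P.colon {b}) ∧ ∀ n, a ^ n ∉ P.colon {b} := by
    refine ⟨hP.1.1.colon_singleton hrad b, fun n hn => h n ?_⟩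
    simpa using hn
  exact hc (hP.2 hcolon Ideal.le_colon (by simpa using hcb))

theorem isPrime_of_maximal
    (hP : Maximal (fun I => IsDiffIdeal (fun i => ⇑(δ i)) I ∧ ∀ n, a ^ n ∉ I) P)
    (hrad : P.IsRadical) : P.IsPrime := by
  refine ⟨fun htop => hP.1.2 0 (by simp [htop]), fun {x y} hxy => ?_⟩
  refine or_iff_not_imp_left.2 fun hx => by_contra fun hy => ?_
  obtain ⟨m, hm⟩ := exists_pow_mul_mem_of_maximal hP hrad hxy hx
  obtain ⟨n, hn⟩ := exists_pow_mul_mem_of_maximal hP hrad (b := a ^ m) (by rwa [mul_comm]) hy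
  exact hP.1.2 (n + m) (by rwa [pow_add])

end MaximalAvoidingPowers

theorem stmt2_general {A : Type*} [CommRing A] {k : ℕ} (δ : Fin k → Derivation ℤ A A)
    (hK : IsKeigher (fun i => ⇑(δ i)))
    (a : A) :
    (∀ p : DiffSpec (fun i => ⇑(δ i)), a ∈ p.1.asIdeal) ↔ IsNilpotent a := by
  refine ⟨fun h => by_contra fun ha => ?_,
    fun ⟨n, hn⟩ p => p.1.2.mem_of_pow_mem n (hn ▸ zero_mem _)⟩
  obtain ⟨P, hP⟩ := exists_maximal_isDiffIdeal_forall_pow_notMem δ ha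
  have hprime : P.IsPrime := isPrime_of_maximal hP (hK.isRadical_of_maximal hP)
  exact hP.1.2 1 (by simpa using h ⟨⟨P, hprime⟩, hP.1.1⟩)

/-- In a Keigher differential ring, an element lies in every prime differential ideal
iff it is nilpotent. -/
theorem stmt2 {A : Type*} [CommRing A] {k : ℕ} (δ : Fin k → Derivation ℤ A A)
    (hcomm : ∀ i j a, δ i (δ j a) = δ j (δ i a))
    (hK : IsKeigher (fun i => ⇑(δ i)))
    (a : A) :
    (∀ p : DiffSpec (fun i => ⇑(δ i)), a ∈ p.1.asIdeal) ↔ IsNilpotent a :=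
  stmt2_general δ hK a
end

section
/- Let A be a differential ring and s ∈ A. The contraction map along the localization homomorphism A → A_s induces a homeomorphism from Spec^Δ(A_s) onto the open subset X_s = {p ∈ Spec^Δ A : s ∉ p} of Spec^Δ A. -/
/-!
Contraction `q ↦ q ∩ A` is already a homeomorphism from `Spec (A_s)` onto the basic open set
`D(s)` of `Spec A`, so it suffices that it matches differential primes with differential primes.
One direction holds along any ring map compatible with the derivations. Conversely, if `q ∩ A`
is differential and `x = a / m ∈ q`, then `a ∈ q ∩ A`, and the Leibniz rule applied to
`x * m = a` gives `m * δ' x = δ a - x * δ m ∈ q`; as `m` is a unit, `δ' x ∈ q`.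
-/

section

variable {A B : Type*} [CommRing A] [CommRing B] {k : ℕ} {d : Fin k → A → A} {d' : Fin k → B → B}

theorem IsDiffIdeal.comap (f : A →+* B)
    (hcompat : ∀ i a, d' i (f a) = f (d i a)) {I : Ideal B} (hI : IsDiffIdeal d' I) :
    IsDiffIdeal d (I.comap f) := fun i x hx => by
  simpa [Ideal.mem_comap, ← hcompat] using hI i (f x) hx

variable [Algebra A B]

theorem IsDiffIdeal.of_comap_of_isLocalization (M : Submonoid A) [IsLocalization M B]
    (hleibniz : ∀ i x y, d' i (x * y) = x * d' i y + y * d' i x)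
    (hcompat : ∀ i a, d' i (algebraMap A B a) = algebraMap A B (d i a)) {I : Ideal B}
    (hI : IsDiffIdeal d (I.comap (algebraMap A B))) : IsDiffIdeal d' I := by
  intro i x hx
  obtain ⟨⟨a, m⟩, hxm⟩ := IsLocalization.surj M x
  have ha : a ∈ I.comap (algebraMap A B) := by
    rw [Ideal.mem_comap, ← hxm]
    exact I.mul_mem_right _ hx
  have hdx : algebraMap A B m * d' i x
      = algebraMap A B (d i a) - x * algebraMap A B (d i m) := by
    rw [← hcompat, ← hcompat, ← hxm, hleibniz]
    ring
  have hmem : algebraMap A B m * d' i x ∈ I := by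
    rw [hdx]
    exact I.sub_mem (hI i a ha) (I.mul_mem_right _ hx)
  exact (I.unit_mul_mem_iff_mem (IsLocalization.map_units B m)).mp hmem

def DiffSpec.comap (f : A →+* B)
    (hcompat : ∀ i a, d' i (f a) = f (d i a)) : DiffSpec d' → DiffSpec d :=
  Subtype.map (PrimeSpectrum.comap f) fun _ hq => hq.comap f hcompat

theorem DiffSpec.isEmbedding_comap_of_isLocalization (M : Submonoid A) [IsLocalization M B]
    (hcompat : ∀ i a, d' i (algebraMap A B a) = algebraMap A B (d i a)) :
    Topology.IsEmbedding (DiffSpec.comap (algebraMap A B) hcompat) :=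
  (Topology.IsEmbedding.of_comp_iff Topology.IsEmbedding.subtypeVal).mp
    ((PrimeSpectrum.localization_comap_isEmbedding B M).comp Topology.IsEmbedding.subtypeVal)

theorem DiffSpec.notMem_comap_of_isLocalization_away (s : A) [IsLocalization.Away s B]
    (hcompat : ∀ i a, d' i (algebraMap A B a) = algebraMap A B (d i a)) (q : DiffSpec d') :
    s ∉ (DiffSpec.comap (algebraMap A B) hcompat q).1.asIdeal := fun hs =>
  q.1.isPrime.ne_top (Ideal.eq_top_of_isUnit_mem _ hs (IsLocalization.Away.algebraMap_isUnit s))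

theorem DiffSpec.exists_comap_eq_of_isLocalization_away (s : A) [IsLocalization.Away s B]
    (hleibniz : ∀ i x y, d' i (x * y) = x * d' i y + y * d' i x)
    (hcompat : ∀ i a, d' i (algebraMap A B a) = algebraMap A B (d i a))
    (p : DiffSpec d) (hs : s ∉ p.1.asIdeal) :
    ∃ q : DiffSpec d', DiffSpec.comap (algebraMap A B) hcompat q = p := by
  obtain ⟨q, hq⟩ : p.1 ∈ Set.range (PrimeSpectrum.comap (algebraMap A B)) := by
    rw [PrimeSpectrum.localization_away_comap_range B s]
    exact hs
  have hdiff : IsDiffIdeal d' q.asIdeal := by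
    refine .of_comap_of_isLocalization (.powers s) hleibniz hcompat ?_
    rw [← PrimeSpectrum.comap_asIdeal, hq]
    exact p.2
  exact ⟨⟨q, hdiff⟩, Subtype.ext hq⟩

noncomputable def DiffSpec.comapAwayHomeomorph (s : A) [IsLocalization.Away s B]
    (hleibniz : ∀ i x y, d' i (x * y) = x * d' i y + y * d' i x)
    (hcompat : ∀ i a, d' i (algebraMap A B a) = algebraMap A B (d i a)) :
    DiffSpec d' ≃ₜ {p : DiffSpec d // s ∉ p.1.asIdeal} :=
  ((DiffSpec.isEmbedding_comap_of_isLocalization (.powers s) hcompat).codRestrict _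
      (DiffSpec.notMem_comap_of_isLocalization_away s hcompat)).toHomeomorphOfSurjective
    fun p => (DiffSpec.exists_comap_eq_of_isLocalization_away s hleibniz hcompat p.1 p.2).imp
      fun _ hq => Subtype.ext hq

end

theorem stmt5_general {A : Type*} [CommRing A] {k : ℕ} (δ : Fin k → Derivation ℤ A A)
    (s : A)
    (δ' : Fin k → Derivation ℤ (Localization.Away s) (Localization.Away s))
    (hcompat : ∀ i a, δ' i (algebraMap A (Localization.Away s) a)
      = algebraMap A (Localization.Away s) (δ i a)) :
    ∃ h : DiffSpec (fun i => ⇑(δ' i)) ≃ₜ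
        {p : DiffSpec (fun i => ⇑(δ i)) // s ∉ p.1.asIdeal},
      ∀ q, (h q).1.1.asIdeal
        = Ideal.comap (algebraMap A (Localization.Away s)) q.1.asIdeal := by
  have hleibniz : ∀ i x y, δ' i (x * y) = x * δ' i y + y * δ' i x := fun i x y => by
    rw [Derivation.leibniz, smul_eq_mul, smul_eq_mul]
  exact ⟨DiffSpec.comapAwayHomeomorph s hleibniz hcompat, fun _ => rfl⟩

/-- Contraction along `A → A_s` is a homeomorphism from `Spec^Δ (A_s)` onto the open
set `X_s = {p : s ∉ p}` of `Spec^Δ A`. -/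
theorem stmt5 {A : Type*} [CommRing A] {k : ℕ} (δ : Fin k → Derivation ℤ A A)
    (hcomm : ∀ i j a, δ i (δ j a) = δ j (δ i a)) (s : A)
    (δ' : Fin k → Derivation ℤ (Localization.Away s) (Localization.Away s))
    (hcompat : ∀ i a, δ' i (algebraMap A (Localization.Away s) a)
      = algebraMap A (Localization.Away s) (δ i a)) :
    ∃ h : DiffSpec (fun i => ⇑(δ' i)) ≃ₜ
        {p : DiffSpec (fun i => ⇑(δ i)) // s ∉ p.1.asIdeal},
      ∀ q, (h q).1.1.asIdeal
        = Ideal.comap (algebraMap A (Localization.Away s)) q.1.asIdeal :=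
  stmt5_general δ s δ' hcompat
end

section
/- Let A and B be differential rings, ν : A → B a differential homomorphism, and suppose B is differentially generated over ν(A) by a single element η for which there exist b_1, …, b_n ∈ A with b_k·η ∈ ν(A) for all k and with the smallest radical differential ideal of A containing {b_1, …, b_n} equal to all of A. Then the contraction map ν* : Spec^Δ B → V(ker ν) ⊆ Spec^Δ A is a homeomorphism. -/
/-!
Fix `c = b_k`. Since `ν c * η ∈ ν(A)`, the elements `x` with `ν c ^ j * x ∈ ν(A)` for some `j`
form a differential subring containing `ν(A)` and `η`, hence all of `B`; that is,
`A_c → B_{ν c}` is surjective. So over `D(c)` contraction is injective and open, and a prime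
`p ⊇ ker ν` with `c ∉ p` lifts to `{x | ν c ^ j * x ∈ ν(p) for some j}`, which is differential
whenever `p` is. Every differential prime of `A` misses some `b_k`, because
`{b_1, …, b_n} = A`, so these pieces cover both spectra.
-/

open PrimeSpectrum

section Away

variable {A B : Type*} [CommRing A] [CommRing B] (ν : A →+* B)

/-- The map `A_c → B_{ν c}` induced by `ν` is surjective. -/
def SurjectiveAway (c : A) : Prop :=
  ∀ x : B, ∃ (j : ℕ) (a : A), ν c ^ j * x = ν a

def awaySubring (c : A) : Subring B where
  carrier := {x | ∃ (j : ℕ) (a : A), ν c ^ j * x = ν a}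
  one_mem' := ⟨0, 1, by simp⟩
  zero_mem' := ⟨0, 0, by simp⟩
  mul_mem' := by
    rintro y z ⟨j, a, ha⟩ ⟨l, d, hd⟩
    exact ⟨j + l, a * d, by rw [map_mul, ← ha, ← hd]; ring⟩
  add_mem' := by
    rintro y z ⟨j, a, ha⟩ ⟨l, d, hd⟩
    refine ⟨j + l, c ^ l * a + c ^ j * d, ?_⟩
    rw [map_add, map_mul, map_mul, map_pow, map_pow, ← ha, ← hd]
    ring
  neg_mem' := by
    rintro y ⟨j, a, ha⟩
    exact ⟨j, -a, by rw [map_neg, ← ha]; ring⟩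

theorem surjectiveAway_iff_awaySubring_eq_top {c : A} :
    SurjectiveAway ν c ↔ awaySubring ν c = ⊤ :=
  (Subring.eq_top_iff' (awaySubring ν c)).symm

variable {ν}

theorem mem_iff_mem_comap_of_pow_mul_eq {c : A} {q : Ideal B} [hq : q.IsPrime]
    (hc : c ∉ q.comap ν) {j : ℕ} {x : B} {a : A} (hx : ν c ^ j * x = ν a) :
    x ∈ q ↔ a ∈ q.comap ν := by
  rw [Ideal.mem_comap, ← hx]
  exact ⟨q.mul_mem_left _, fun h =>
    (hq.mem_or_mem h).resolve_left fun hcj => hc (hq.mem_of_pow_mem j hcj)⟩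

theorem le_of_comap_le {c : A} (h : SurjectiveAway ν c) {q₁ q₂ : Ideal B} [q₂.IsPrime]
    (hc : c ∉ q₂.comap ν) (hle : q₁.comap ν ≤ q₂.comap ν) : q₁ ≤ q₂ := by
  intro x hx
  obtain ⟨j, a, ha⟩ := h x
  refine (mem_iff_mem_comap_of_pow_mul_eq hc ha).2 (hle ?_)
  rw [Ideal.mem_comap, ← ha]
  exact q₁.mul_mem_left _ hx

theorem notMem_iff_exists_notMem_comap {E : Set A} {q : Ideal B} [q.IsPrime]
    (hE : ∃ c ∈ E, c ∉ q.comap ν) {x : B} {j : A → ℕ} {a : A → A}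
    (ha : ∀ c ∈ E, ν c ^ j c * x = ν (a c)) : x ∉ q ↔ ∃ c ∈ E, a c ∉ q.comap ν := by
  refine ⟨fun hx => ?_, fun ⟨c, hcE, hac⟩ hx => hac ?_⟩
  · obtain ⟨c, hcE, hc⟩ := hE
    exact ⟨c, hcE, fun hac => hx ((mem_iff_mem_comap_of_pow_mul_eq hc (ha c hcE)).2 hac)⟩
  · rw [Ideal.mem_comap, ← ha c hcE]
    exact q.mul_mem_left _ hx

theorem mem_of_map_pow_mul_eq {p : Ideal A} [hp : p.IsPrime] (hker : RingHom.ker ν ≤ p)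
    {c : A} (hc : c ∉ p) {j : ℕ} {a a' : A} (h : ν (c ^ j * a') = ν a) (ha : a ∈ p) :
    a' ∈ p := by
  have hmem : c ^ j * a' ∈ p := by
    simpa using p.add_mem (hker ((RingHom.sub_mem_ker_iff ν).2 h)) ha
  exact (hp.mem_or_mem hmem).resolve_left fun hcj => hc (hp.mem_of_pow_mem j hcj)

/-- For `c ∉ p` and `ker ν ≤ p`, this is the prime of `B` lying over `p`. -/
def awayIdeal {c : A} (h : SurjectiveAway ν c) (p : Ideal A) : Ideal B where
  carrier := {x | ∃ (j : ℕ) (a : A), ν c ^ j * x = ν a ∧ a ∈ p}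
  zero_mem' := ⟨0, 0, by simp, p.zero_mem⟩
  add_mem' := by
    rintro y z ⟨j, a, ha, hap⟩ ⟨l, d, hd, hdp⟩
    refine ⟨j + l, c ^ l * a + c ^ j * d, ?_,
      p.add_mem (p.mul_mem_left _ hap) (p.mul_mem_left _ hdp)⟩
    rw [map_add, map_mul, map_mul, map_pow, map_pow, ← ha, ← hd]
    ring
  smul_mem' := by
    rintro z x ⟨j, a, ha, hap⟩
    obtain ⟨l, d, hd⟩ := h z
    refine ⟨j + l, d * a, ?_, p.mul_mem_left _ hap⟩
    rw [map_mul, smul_eq_mul, ← hd, ← ha]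
    ring

variable {c : A} (h : SurjectiveAway ν c) {p : Ideal A}

variable [hp : p.IsPrime] (hc : c ∉ p) (hker : RingHom.ker ν ≤ p)
include hc hker

theorem comap_awayIdeal : (awayIdeal h p).comap ν = p := by
  ext a
  refine ⟨fun ⟨j, d, hd, hdp⟩ => ?_, fun ha => ⟨0, a, by simp, ha⟩⟩
  exact mem_of_map_pow_mul_eq hker hc (by rw [map_mul, map_pow, hd]) hdp

theorem isPrime_awayIdeal : (awayIdeal h p).IsPrime := by
  refine ⟨fun htop => ?_, fun {x y} hxy => ?_⟩
  · have : (1 : A) ∈ p := by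
      rw [← comap_awayIdeal h hc hker, htop]
      exact Submodule.mem_top
    exact hp.ne_top ((Ideal.eq_top_iff_one p).2 this)
  · obtain ⟨j, t, ht, htp⟩ := hxy
    obtain ⟨jx, ax, hax⟩ := h x
    obtain ⟨jy, ay, hay⟩ := h y
    have hprod : ν (c ^ (jx + jy) * t) = ν (c ^ j * (ax * ay)) := by
      simp only [map_mul, map_pow, ← ht, ← hax, ← hay]
      ring
    have hprod_mem : ax * ay ∈ p :=
      mem_of_map_pow_mul_eq hker hc hprod.symm (p.mul_mem_left _ htp)
    exact (hp.mem_or_mem hprod_mem).imp (fun hx => ⟨jx, ax, hax, hx⟩)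
      fun hy => ⟨jy, ay, hay, hy⟩

end Away

section Differential

variable {A B : Type*} [CommRing A] [CommRing B] {ν : A →+* B}

/-- Differentiating `ν c ^ (j + 1) * x = ν (c * a)` expresses `ν c ^ (j + 1) * δ x` through `ν`. -/
theorem pow_succ_mul_derivation_eq {dA : Derivation ℤ A A} {dB : Derivation ℤ B B}
    (hd : ∀ a, ν (dA a) = dB (ν a)) {c a : A} {j : ℕ} {x : B} (h : ν c ^ j * x = ν a) :
    ν c ^ (j + 1) * dB x = ν (dA (c * a) - (j + 1) * (dA c * a)) := by
  have hsucc : ν c ^ (j + 1) * x = ν (c * a) := by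
    rw [map_mul]
    linear_combination ν c * h
  have hder : ν (dA (c * a)) = dB (ν c ^ (j + 1) * x) := by rw [hd, hsucc]
  simp only [Derivation.leibniz, Derivation.leibniz_pow, Nat.add_sub_cancel, smul_eq_mul,
    nsmul_eq_mul, ← hd, map_sub, map_mul, map_add, map_natCast, map_one, Nat.cast_succ] at hder ⊢
  linear_combination -hder - ((j : B) + 1) * ν (dA c) * h

variable {k : ℕ} {δA : Fin k → Derivation ℤ A A} {δB : Fin k → Derivation ℤ B B}
  (hν : ∀ i a, ν (δA i a) = δB i (ν a))
include hν

theorem derivation_mem_awaySubring (c : A) {x : B} (hx : x ∈ awaySubring ν c) (i : Fin k) :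
    δB i x ∈ awaySubring ν c := by
  obtain ⟨j, a, ha⟩ := hx
  exact ⟨j + 1, _, pow_succ_mul_derivation_eq (hν i) ha⟩

theorem surjectiveAway_of_forall_diffSubring {η : B}
    (hgen : ∀ S : Subring B, (∀ x ∈ S, ∀ i, δB i x ∈ S) → Set.range ν ⊆ (S : Set B) →
      η ∈ S → S = ⊤)
    {c : A} (hc : ν c * η ∈ Set.range ν) : SurjectiveAway ν c := by
  rw [surjectiveAway_iff_awaySubring_eq_top]
  refine hgen _ (fun x hx => derivation_mem_awaySubring hν c hx) ?_ ?_
  · rintro _ ⟨a, rfl⟩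
    exact ⟨0, a, by simp⟩
  · obtain ⟨a, ha⟩ := hc
    exact ⟨1, a, by rw [pow_one, ha]⟩

theorem isDiffIdeal_awayIdeal {c : A} (h : SurjectiveAway ν c) {p : Ideal A}
    (hp : IsDiffIdeal (fun i => ⇑(δA i)) p) :
    IsDiffIdeal (fun i => ⇑(δB i)) (awayIdeal h p) := by
  rintro i x ⟨j, a, ha, hap⟩
  refine ⟨j + 1, _, pow_succ_mul_derivation_eq (hν i) ha, ?_⟩
  exact sub_mem (hp i _ (p.mul_mem_left _ hap)) (p.mul_mem_left _ (p.mul_mem_left _ hap))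

theorem isDiffIdeal_comap {q : Ideal B} (hq : IsDiffIdeal (fun i => ⇑(δB i)) q) :
    IsDiffIdeal (fun i => ⇑(δA i)) (q.comap ν) := by
  intro i a ha
  rw [Ideal.mem_comap, hν]
  exact hq i _ ha

end Differential

theorem exists_notMem_of_radDiffGen_eq_top {A : Type*} [CommRing A] {k : ℕ}
    {d : Fin k → A → A} {E : Set A} (hE : radDiffGen d E = ⊤) {p : Ideal A} [hp : p.IsPrime]
    (hd : IsDiffIdeal d p) : ∃ e ∈ E, e ∉ p := by
  by_contra! hEp
  have hle : radDiffGen d E ≤ p := sInf_le ⟨hEp, hp.isRadical, hd⟩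
  exact hp.ne_top (top_le_iff.mp (hE ▸ hle))

section Contraction

variable {A B : Type*} [CommRing A] [CommRing B] {k : ℕ}
  {δA : Fin k → Derivation ℤ A A} {δB : Fin k → Derivation ℤ B B} {ν : A →+* B}
  (hν : ∀ i a, ν (δA i a) = δB i (ν a))

def diffContraction : DiffSpec (fun i => ⇑(δB i)) →
    {p : DiffSpec (fun i => ⇑(δA i)) // RingHom.ker ν ≤ p.1.asIdeal} :=
  fun q => ⟨⟨comap ν q.1, isDiffIdeal_comap hν q.2⟩, Ideal.comap_mono bot_le⟩

theorem continuous_diffContraction : Continuous (diffContraction hν) :=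
  ((continuous_comap ν).comp continuous_subtype_val).subtype_mk _ |>.subtype_mk _

variable {E : Set A} (hL : ∀ c ∈ E, SurjectiveAway ν c)
  (hE : radDiffGen (fun i => ⇑(δA i)) E = ⊤)
include hL hE

theorem diffContraction_injective : Function.Injective (diffContraction hν) := by
  intro q₁ q₂ hq
  have hcomap : q₁.1.asIdeal.comap ν = q₂.1.asIdeal.comap ν :=
    congrArg (fun r => r.1.1.asIdeal) hq
  obtain ⟨c, hcE, hc₁⟩ := exists_notMem_of_radDiffGen_eq_top hE (isDiffIdeal_comap hν q₁.2)
  have hc₂ : c ∉ q₂.1.asIdeal.comap ν := hcomap ▸ hc₁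
  exact Subtype.ext <| PrimeSpectrum.ext <| le_antisymm
    (le_of_comap_le (hL c hcE) hc₂ hcomap.le) (le_of_comap_le (hL c hcE) hc₁ hcomap.ge)

theorem diffContraction_surjective : Function.Surjective (diffContraction hν) := by
  rintro ⟨⟨p, hp⟩, hker⟩
  obtain ⟨c, hcE, hc⟩ := exists_notMem_of_radDiffGen_eq_top hE hp
  refine ⟨⟨⟨awayIdeal (hL c hcE) p.asIdeal, isPrime_awayIdeal (hL c hcE) hc hker⟩,
    isDiffIdeal_awayIdeal hν (hL c hcE) hp⟩, ?_⟩
  exact Subtype.ext <| Subtype.ext <| PrimeSpectrum.ext <| comap_awayIdeal (hL c hcE) hc hker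

theorem isOpenMap_diffContraction : IsOpenMap (diffContraction hν) := by
  refine (isTopologicalBasis_basic_opens.induced
    (Subtype.val : DiffSpec (fun i => ⇑(δB i)) → _)).isOpenMap_iff.2 ?_
  rintro _ ⟨_, ⟨x, rfl⟩, rfl⟩
  choose! j a ha using fun c hc => hL c hc x
  let W : Set (PrimeSpectrum A) := ⋃ c ∈ E, basicOpen (a c)
  have hW : Subtype.val ⁻¹' (basicOpen x : Set (PrimeSpectrum B)) =
      diffContraction hν ⁻¹' ((fun r => r.1.1) ⁻¹' W) := by
    ext q
    have hq := exists_notMem_of_radDiffGen_eq_top hE (isDiffIdeal_comap hν q.2)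
    simpa [W, diffContraction] using notMem_iff_exists_notMem_comap hq ha
  rw [hW, (diffContraction_surjective hν hL hE).image_preimage]
  exact (isOpen_biUnion fun c _ => isOpen_basicOpen).preimage
    (continuous_subtype_val.comp continuous_subtype_val)

end Contraction

theorem stmt6_general {A B : Type*} [CommRing A] [CommRing B] {k : ℕ}
    (δA : Fin k → Derivation ℤ A A) (δB : Fin k → Derivation ℤ B B)
    (ν : A →+* B) (hν : ∀ i a, ν (δA i a) = δB i (ν a))
    (η : B)
    (hgen : ∀ S : Subring B, (∀ x ∈ S, ∀ i, δB i x ∈ S) → Set.range ν ⊆ (S : Set B) →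
      η ∈ S → S = ⊤)
    (n : ℕ) (b : Fin n → A)
    (hb : ∀ m : Fin n, ν (b m) * η ∈ Set.range ν)
    (hunit : radDiffGen (fun i => ⇑(δA i)) (Set.range b) = ⊤) :
    ∃ h : DiffSpec (fun i => ⇑(δB i)) ≃ₜ
        {p : DiffSpec (fun i => ⇑(δA i)) // RingHom.ker ν ≤ p.1.asIdeal},
      ∀ q, (h q).1.1.asIdeal = Ideal.comap ν q.1.asIdeal := by
  have hL : ∀ c ∈ Set.range b, SurjectiveAway ν c := by
    rintro _ ⟨m, rfl⟩
    exact surjectiveAway_of_forall_diffSubring hν hgen (hb m)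
  have hbij : Function.Bijective (diffContraction hν) :=
    ⟨diffContraction_injective hν hL hunit, diffContraction_surjective hν hL hunit⟩
  exact ⟨(Equiv.ofBijective _ hbij).toHomeomorphOfContinuousOpen
    (continuous_diffContraction hν) (isOpenMap_diffContraction hν hL hunit), fun _ => rfl⟩

/-- If `B` is differentially generated over `ν(A)` by a single element `η` with
`ν(b k) * η ∈ ν(A)` for elements `b k` whose smallest radical differential ideal is all
of `A`, then contraction `ν* : Spec^Δ B → V(ker ν)` is a homeomorphism. -/
theorem stmt6 {A B : Type*} [CommRing A] [CommRing B] {k : ℕ}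
    (δA : Fin k → Derivation ℤ A A) (δB : Fin k → Derivation ℤ B B)
    (hcommA : ∀ i j a, δA i (δA j a) = δA j (δA i a))
    (hcommB : ∀ i j b, δB i (δB j b) = δB j (δB i b))
    (ν : A →+* B) (hν : ∀ i a, ν (δA i a) = δB i (ν a))
    (η : B)
    (hgen : ∀ S : Subring B, (∀ x ∈ S, ∀ i, δB i x ∈ S) → Set.range ν ⊆ (S : Set B) →
      η ∈ S → S = ⊤)
    (n : ℕ) (b : Fin n → A)
    (hb : ∀ m : Fin n, ν (b m) * η ∈ Set.range ν)
    (hunit : radDiffGen (fun i => ⇑(δA i)) (Set.range b) = ⊤) :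
    ∃ h : DiffSpec (fun i => ⇑(δB i)) ≃ₜ
        {p : DiffSpec (fun i => ⇑(δA i)) // RingHom.ker ν ≤ p.1.asIdeal},
      ∀ q, (h q).1.1.asIdeal = Ideal.comap ν q.1.asIdeal :=
  stmt6_general δA δB ν hν η hgen n b hb hunit
end

section
/- Let (A_α) be a direct system of differential A-algebras with maps ν_α : A → A_α such that each ν_α* : Spec^Δ A_α → Spec^Δ A is a bijection. Then the contraction map ν* : Spec^Δ(colim A_α) → Spec^Δ A is surjective: for every prime differential ideal p of A, the direct limit of the compatible family of prime differential ideals p_α ⊆ A_α with ν_α^{-1}(p_α) = p is a prime differential ideal of colim A_α contracting to p. -/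
/-- For a direct system of differential `A`-algebras whose contraction maps on differential
spectra are all bijections, the contraction map of the direct limit is surjective: every
prime differential ideal `p` of `A` is the contraction of a prime differential ideal of
the limit, namely the direct limit (union of images) of the prime differential ideals
`p_α ⊆ A_α` contracting to `p`. -/
theorem stmt9 {A : Type*} [CommRing A] {k : ℕ}
    {ι : Type*} [Preorder ι] [IsDirected ι (· ≤ ·)] [Nonempty ι]
    (G : ι → Type*) [∀ α, CommRing (G α)]
    (f : ∀ α β, α ≤ β → G α → G β) [DirectedSystem G fun α β h => f α β h]
    (hfhom : ∀ α β h, ∃ r : G α →+* G β, ⇑r = f α β h)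
    (δ : Fin k → Derivation ℤ A A)
    (hcomm : ∀ i j a, δ i (δ j a) = δ j (δ i a))
    (δG : ∀ α, Fin k → Derivation ℤ (G α) (G α))
    (ν : ∀ α, A →+* G α)
    (hνcompat : ∀ α β h a, f α β h (ν α a) = ν β a)
    (hνdiff : ∀ α i a, ν α (δ i a) = δG α i (ν α a))
    (hfdiff : ∀ α β h i x, f α β h (δG α i x) = δG β i (f α β h x))
    (δ' : Fin k → Derivation ℤ (Ring.DirectLimit G f) (Ring.DirectLimit G f))
    (hδ' : ∀ α i x, δ' i (Ring.DirectLimit.of G f α x) = Ring.DirectLimit.of G f α (δG α i x))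
    (hα : ∀ α, ∃ e : DiffSpec (fun i => ⇑(δG α i)) ≃ DiffSpec (fun i => ⇑(δ i)),
      ∀ q, (e q).1.asIdeal = Ideal.comap (ν α) q.1.asIdeal)
    (νlim : A →+* Ring.DirectLimit G f)
    (hνlim : ∀ α a, νlim a = Ring.DirectLimit.of G f α (ν α a)) :
    ∀ p : DiffSpec (fun i => ⇑(δ i)),
      ∃ q : DiffSpec (fun i => ⇑(δ' i)),
        Ideal.comap νlim q.1.asIdeal = p.1.asIdeal ∧
        ∀ x, x ∈ q.1.asIdeal ↔ ∃ (α : ι) (qα : DiffSpec (fun i => ⇑(δG α i))) (a : G α),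
          Ideal.comap (ν α) qα.1.asIdeal = p.1.asIdeal ∧ a ∈ qα.1.asIdeal ∧
          Ring.DirectLimit.of G f α a = x := by
  intro p
  classical
  -- ring hom versions of the transition maps
  have hF : ∀ α β (h : α ≤ β) (x : G α), (hfhom α β h).choose x = f α β h x := by
    intro α β h x; rw [(hfhom α β h).choose_spec]
  set F : ∀ α β, α ≤ β → G α →+* G β := fun α β h => (hfhom α β h).choose with hFdef
  have hFf : (fun α β (h : α ≤ β) => ⇑(F α β h)) = f := by
    funext α β h x; exact hF α β h x
  have hfmul : ∀ α β (h : α ≤ β) (x y : G α),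
      f α β h (x * y) = f α β h x * f α β h y := by
    intro α β h x y
    rw [← hF, ← hF, ← hF, map_mul]
  -- eventual equality in the direct limit
  have key : ∀ α (x y : G α), Ring.DirectLimit.of G f α x = Ring.DirectLimit.of G f α y →
      ∃ β, ∃ h : α ≤ β, f α β h x = f α β h y := by
    intro α x y hxy
    have h0 : Ring.DirectLimit.of G f α (x - y) = 0 := by
      rw [map_sub, hxy, sub_self]
    haveI hDS : DirectedSystem G (fun α β h => (F α β h : G α → G β)) := by
      rw [show (fun α β (h : α ≤ β) => ⇑(F α β h)) = f from hFf]; infer_instance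
    rw [← hFf] at h0
    obtain ⟨β, h, hb⟩ := Ring.DirectLimit.of.zero_exact h0
    refine ⟨β, h, ?_⟩
    rw [map_sub, sub_eq_zero] at hb
    rw [← hF, ← hF, hb]
  -- chosen equivalences and the distinguished primes q_α
  choose e he using hα
  set qs : ∀ α, DiffSpec (fun i => ⇑(δG α i)) := fun α => (e α).symm p with hqs
  have hqsp : ∀ α, Ideal.comap (ν α) (qs α).1.asIdeal = p.1.asIdeal := by
    intro α
    rw [← he α ((e α).symm p), Equiv.apply_symm_apply]
  have huniq : ∀ α (qα : DiffSpec (fun i => ⇑(δG α i))),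
      Ideal.comap (ν α) qα.1.asIdeal = p.1.asIdeal → qα = qs α := by
    intro α qα h
    refine (e α).injective (Subtype.ext (PrimeSpectrum.ext ?_))
    rw [he α qα, he α (qs α), h, hqsp α]
  -- compatibility of the q_α
  have hcompat : ∀ α β (h : α ≤ β) (a : G α),
      a ∈ (qs α).1.asIdeal ↔ f α β h a ∈ (qs β).1.asIdeal := by
    intro α β h a
    haveI : (qs β).1.asIdeal.IsPrime := (qs β).1.2
    have hdiff : IsDiffIdeal (fun i => ⇑(δG α i))
        (Ideal.comap (F α β h) (qs β).1.asIdeal) := by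
      intro i x hx
      simp only [Ideal.mem_comap] at hx ⊢
      rw [hF, hfdiff, ← hF]
      exact (qs β).2 i _ hx
    set J : DiffSpec (fun i => ⇑(δG α i)) :=
      ⟨⟨Ideal.comap (F α β h) (qs β).1.asIdeal, Ideal.IsPrime.comap _⟩, hdiff⟩ with hJdef
    have hJ : J = qs α := by
      refine huniq α J ?_
      have heq : Ideal.comap (ν α) (Ideal.comap (F α β h) (qs β).1.asIdeal)
          = Ideal.comap (ν β) (qs β).1.asIdeal := by
        ext x
        simp only [Ideal.mem_comap]
        rw [hF, hνcompat]
      show Ideal.comap (ν α) (Ideal.comap (F α β h) (qs β).1.asIdeal) = p.1.asIdeal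
      rw [heq, hqsp β]
    constructor
    · intro ha
      have hmem : a ∈ J.1.asIdeal := by rw [hJ]; exact ha
      have : F α β h a ∈ (qs β).1.asIdeal := hmem
      rwa [hF] at this
    · intro ha
      have hmem : a ∈ J.1.asIdeal := by
        show F α β h a ∈ (qs β).1.asIdeal
        rw [hF]; exact ha
      rw [hJ] at hmem; exact hmem
  have hup : ∀ α β (h : α ≤ β) a, a ∈ (qs α).1.asIdeal → f α β h a ∈ (qs β).1.asIdeal :=
    fun α β h a ha => (hcompat α β h a).1 ha
  -- the candidate set
  set Qc : Set (Ring.DirectLimit G f) :=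
    {x | ∃ α a, a ∈ (qs α).1.asIdeal ∧ Ring.DirectLimit.of G f α a = x} with hQc
  -- membership criterion for images
  have hmem_of : ∀ α (a : G α), Ring.DirectLimit.of G f α a ∈ Qc ↔
      ∃ β, ∃ h : α ≤ β, f α β h a ∈ (qs β).1.asIdeal := by
    intro α a
    constructor
    · rintro ⟨σ, c, hc, hceq⟩
      obtain ⟨τ, hστ, hατ⟩ := directed_of (· ≤ ·) σ α
      have h1 : Ring.DirectLimit.of G f τ (f σ τ hστ c)
          = Ring.DirectLimit.of G f τ (f α τ hατ a) := by
        rw [Ring.DirectLimit.of_f, Ring.DirectLimit.of_f, hceq]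
      obtain ⟨ρ, hτρ, hρ⟩ := key τ _ _ h1
      refine ⟨ρ, hατ.trans hτρ, ?_⟩
      have h2 : f τ ρ hτρ (f α τ hατ a) = f α ρ (hατ.trans hτρ) a :=
        DirectedSystem.map_map (f := fun α β h => f α β h) hατ hτρ a
      have h3 : f τ ρ hτρ (f σ τ hστ c) = f σ ρ (hστ.trans hτρ) c :=
        DirectedSystem.map_map (f := fun α β h => f α β h) hστ hτρ c
      rw [← h2, ← hρ, h3]
      exact hup σ ρ _ c hc
    · rintro ⟨β, h, hb⟩
      exact ⟨β, f α β h a, hb, Ring.DirectLimit.of_f h a⟩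
  have hαne : Nonempty ι := inferInstance
  obtain ⟨α₀⟩ := hαne
  -- Qc is an ideal
  set Q : Ideal (Ring.DirectLimit G f) :=
    { carrier := Qc
      add_mem' := by
        rintro x y ⟨α, a, ha, rfl⟩ ⟨β, b, hb, rfl⟩
        obtain ⟨γ, hαγ, hβγ⟩ := directed_of (· ≤ ·) α β
        refine ⟨γ, f α γ hαγ a + f β γ hβγ b,
          Ideal.add_mem _ (hup _ _ _ _ ha) (hup _ _ _ _ hb), ?_⟩
        rw [map_add, Ring.DirectLimit.of_f, Ring.DirectLimit.of_f]
      zero_mem' := ⟨α₀, 0, Ideal.zero_mem _, map_zero _⟩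
      smul_mem' := by
        rintro r x ⟨α, a, ha, rfl⟩
        obtain ⟨β, b, hb⟩ := Ring.DirectLimit.exists_of r
        obtain ⟨γ, hαγ, hβγ⟩ := directed_of (· ≤ ·) α β
        refine ⟨γ, f β γ hβγ b * f α γ hαγ a,
          Ideal.mul_mem_left _ _ (hup _ _ _ _ ha), ?_⟩
        rw [map_mul, Ring.DirectLimit.of_f, Ring.DirectLimit.of_f, hb, smul_eq_mul] } with hQdef
  have hQmem : ∀ x, x ∈ Q ↔ x ∈ Qc := fun x => Iff.rfl
  -- Q is prime
  have hQprime : Q.IsPrime := by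
    constructor
    · intro htop
      have h1 : (1 : Ring.DirectLimit G f) ∈ Q := htop ▸ Submodule.mem_top
      rw [hQmem] at h1
      have h1' : Ring.DirectLimit.of G f α₀ 1 ∈ Qc := by rwa [map_one]
      obtain ⟨β, h, hb⟩ := (hmem_of α₀ 1).1 h1'
      have hone : f α₀ β h (1 : G α₀) = 1 := by rw [← hF, map_one]
      rw [hone] at hb
      exact (qs β).1.2.ne_top ((Ideal.eq_top_iff_one _).2 hb)
    · intro x y hxy
      obtain ⟨α, a, ha⟩ := Ring.DirectLimit.exists_of x
      obtain ⟨β, b, hb⟩ := Ring.DirectLimit.exists_of y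
      obtain ⟨γ, hαγ, hβγ⟩ := directed_of (· ≤ ·) α β
      have hx : x = Ring.DirectLimit.of G f γ (f α γ hαγ a) := by
        rw [Ring.DirectLimit.of_f, ha]
      have hy : y = Ring.DirectLimit.of G f γ (f β γ hβγ b) := by
        rw [Ring.DirectLimit.of_f, hb]
      have hxyQ : Ring.DirectLimit.of G f γ (f α γ hαγ a * f β γ hβγ b) ∈ Qc := by
        rw [map_mul, ← hx, ← hy]
        exact hxy
      obtain ⟨ρ, h, hρ⟩ := (hmem_of γ _).1 hxyQ
      rw [hfmul] at hρ
      haveI : (qs ρ).1.asIdeal.IsPrime := (qs ρ).1.2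
      rcases this.mem_or_mem hρ with hc | hc
      · left
        rw [hQmem, hx]
        exact (hmem_of γ _).2 ⟨ρ, h, hc⟩
      · right
        rw [hQmem, hy]
        exact (hmem_of γ _).2 ⟨ρ, h, hc⟩
  -- Q is differential
  have hQdiff : IsDiffIdeal (fun i => ⇑(δ' i)) Q := by
    rintro i x ⟨α, a, ha, rfl⟩
    show δ' i (Ring.DirectLimit.of G f α a) ∈ Qc
    rw [hδ']
    exact ⟨α, δG α i a, (qs α).2 i a ha, rfl⟩
  refine ⟨⟨⟨Q, hQprime⟩, hQdiff⟩, ?_, ?_⟩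
  · -- contraction is p
    ext x
    simp only [Ideal.mem_comap]
    show νlim x ∈ Qc ↔ x ∈ p.1.asIdeal
    rw [hνlim α₀ x, hmem_of]
    constructor
    · rintro ⟨β, h, hb⟩
      rw [hνcompat] at hb
      have : x ∈ Ideal.comap (ν β) (qs β).1.asIdeal := hb
      rwa [hqsp β] at this
    · intro hx
      refine ⟨α₀, le_refl α₀, ?_⟩
      rw [hνcompat]
      have : x ∈ Ideal.comap (ν α₀) (qs α₀).1.asIdeal := by rw [hqsp α₀]; exact hx
      exact this
  · -- description of the members
    intro x
    constructor
    · rintro ⟨α, a, ha, rfl⟩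
      exact ⟨α, qs α, a, hqsp α, ha, rfl⟩
    · rintro ⟨α, qα, a, hcom, ha, hx⟩
      have hq : qα = qs α := huniq α qα hcom
      rw [hq] at ha
      exact ⟨α, a, ha, hx⟩
end

section
/- Let A be a Keigher differential ring, X = Spec^Δ A, O its structure sheaf (sections are functions into the local rings A_p, locally of the form a/b), and O' the residue-field sheaf (functions into K(p) = Frac(A/p)). Let φ(X) : O(X) → O'(X) be the map reducing each value f(p) ∈ A_p modulo pA_p. Then ker φ(X) equals the nilradical of O(X). -/
/-- The canonical map from `A` to the residue field `K(p) = Frac(A/p)`. -/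
noncomputable def resMap {A : Type*} [CommRing A] {k : ℕ} {d : Fin k → A → A}
    (p : DiffSpec d) : A →+* FractionRing (A ⧸ p.1.asIdeal) :=
  (algebraMap (A ⧸ p.1.asIdeal) (FractionRing (A ⧸ p.1.asIdeal))).comp
    (Ideal.Quotient.mk p.1.asIdeal)

/-- A function `X → ⊔_p K(p)` is regular if it is locally a quotient `a/b` with `b`
outside every prime differential ideal of the neighborhood. -/
def RegularRes {A : Type*} [CommRing A] {k : ℕ} {d : Fin k → A → A}
    (f : ∀ p : DiffSpec d, FractionRing (A ⧸ p.1.asIdeal)) : Prop :=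
  ∀ p : DiffSpec d, ∃ U : Set (DiffSpec d), IsOpen U ∧ p ∈ U ∧ ∃ a b : A,
    (∀ q ∈ U, b ∉ q.1.asIdeal) ∧ ∀ q ∈ U, f q * resMap q b = resMap q a

/-- A function `X → ⊔_p A_p` is regular if it is locally a quotient `a/b` with `b`
outside every prime differential ideal of the neighborhood. -/
def RegularLoc {A : Type*} [CommRing A] {k : ℕ} {d : Fin k → A → A}
    (f : ∀ p : DiffSpec d, Localization.AtPrime p.1.asIdeal) : Prop :=
  ∀ p : DiffSpec d, ∃ U : Set (DiffSpec d), IsOpen U ∧ p ∈ U ∧ ∃ a b : A,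
    (∀ q ∈ U, b ∉ q.1.asIdeal) ∧
    ∀ q ∈ U, f q * algebraMap A (Localization.AtPrime q.1.asIdeal) b
      = algebraMap A (Localization.AtPrime q.1.asIdeal) a

section Keigher

variable {R A : Type*} [CommRing R] [CommRing A] [Algebra R A] {k : ℕ}
  {δ : Fin k → Derivation R A A}

theorem isDiffIdeal_bot_s13 : IsDiffIdeal (fun i => ⇑(δ i)) ⊥ := by
  intro i x hx
  show δ i x ∈ ⊥
  rw [Ideal.mem_bot.mp hx, map_zero]
  exact Ideal.zero_mem ⊥

theorem IsDiffIdeal.comap_map_algebraMap {I : Ideal A} (hI : IsDiffIdeal (fun i => ⇑(δ i)) I)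
    (M : Submonoid A) (B : Type*) [CommRing B] [Algebra A B] [IsLocalization M B] :
    IsDiffIdeal (fun i => ⇑(δ i)) ((I.map (algebraMap A B)).comap (algebraMap A B)) := by
  intro i x hx
  rw [Ideal.mem_comap, IsLocalization.algebraMap_mem_map_algebraMap_iff M] at hx ⊢
  obtain ⟨s, hs, hsx⟩ := hx
  have hleibniz : s * s * δ i x = s * δ i (s * x) - δ i s * (s * x) := by
    rw [Derivation.leibniz]
    simp only [smul_eq_mul]
    ring
  refine ⟨s * s, M.mul_mem hs hs, ?_⟩
  rw [hleibniz]
  exact I.sub_mem (I.mul_mem_left _ (hI i _ hsx)) (I.mul_mem_left _ hsx)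

/-- `P` is the radical of the saturation of `I` at `P`, which is differential. -/
theorem IsKeigher.isDiffIdeal_of_mem_minimalPrimes (hK : IsKeigher (fun i => ⇑(δ i)))
    {I P : Ideal A} (hI : IsDiffIdeal (fun i => ⇑(δ i)) I) (hP : P ∈ I.minimalPrimes) :
    IsDiffIdeal (fun i => ⇑(δ i)) P := by
  have := hP.isPrime
  have hsat : ((I.map (algebraMap A (Localization.AtPrime P))).comap
      (algebraMap A (Localization.AtPrime P))).radical = P := by
    rw [← Ideal.comap_radical,
      IsLocalization.AtPrime.radical_map_of_mem_minimalPrimes (Localization.AtPrime P) P I hP,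
      IsLocalization.AtPrime.map_eq_maximalIdeal P]
    exact Localization.AtPrime.under_maximalIdeal
  simpa only [hsat] using hK _ (hI.comap_map_algebraMap P.primeCompl (Localization.AtPrime P))

theorem IsKeigher.mem_radical_of_forall_mem (hK : IsKeigher (fun i => ⇑(δ i)))
    {I : Ideal A} (hI : IsDiffIdeal (fun i => ⇑(δ i)) I) {x : A}
    (hx : ∀ p : DiffSpec (fun i => ⇑(δ i)), I ≤ p.1.asIdeal → x ∈ p.1.asIdeal) :
    x ∈ I.radical := by
  rw [← Ideal.sInf_minimalPrimes]
  exact Submodule.mem_sInf.2 fun P hP =>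
    hx ⟨⟨P, hP.isPrime⟩, hK.isDiffIdeal_of_mem_minimalPrimes hI hP⟩ hP.le

theorem IsKeigher.isNilpotent_of_forall_mem (hK : IsKeigher (fun i => ⇑(δ i))) {x : A}
    (hx : ∀ p : DiffSpec (fun i => ⇑(δ i)), x ∈ p.1.asIdeal) : IsNilpotent x :=
  mem_nilradical.1 (hK.mem_radical_of_forall_mem isDiffIdeal_bot_s13 fun p _ => hx p)

theorem IsKeigher.eq_top_of_forall_not_le (hK : IsKeigher (fun i => ⇑(δ i)))
    {I : Ideal A} (hI : IsDiffIdeal (fun i => ⇑(δ i)) I)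
    (h : ∀ p : DiffSpec (fun i => ⇑(δ i)), ¬I ≤ p.1.asIdeal) : I = ⊤ :=
  Ideal.radical_eq_top.1 <| (Ideal.eq_top_iff_one _).2 <|
    hK.mem_radical_of_forall_mem hI fun p hle => absurd hle (h p)

end Keigher

section NilpotentOn

variable {A : Type*} [CommRing A] {k : ℕ} {d : Fin k → A → A}

theorem resMap_eq_zero_iff {p : DiffSpec d} {a : A} : resMap p a = 0 ↔ a ∈ p.1.asIdeal := by
  simp [resMap, Ideal.Quotient.eq_zero_iff_mem]

theorem DiffSpec.exists_basicOpen_subset {U : Set (DiffSpec d)} (hU : IsOpen U) {p : DiffSpec d}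
    (hp : p ∈ U) : ∃ g ∉ p.1.asIdeal, ∀ q : DiffSpec d, g ∉ q.1.asIdeal → q ∈ U := by
  obtain ⟨V, hV, rfl⟩ := isOpen_induced_iff.mp hU
  obtain ⟨_, ⟨g, rfl⟩, hpg, hgV⟩ :=
    PrimeSpectrum.isTopologicalBasis_basic_opens.exists_subset_of_mem_open hp hV
  exact ⟨g, hpg, fun q hq => hgV hq⟩

def nilpotentOnIdeal {M : DiffSpec d → Type*} [∀ p, MonoidWithZero (M p)] (f : ∀ p, M p) :
    Ideal A where
  carrier := {x | ∃ n : ℕ, ∀ q : DiffSpec d, x ∉ q.1.asIdeal → f q ^ n = 0}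
  zero_mem' := ⟨0, fun q hq => absurd q.1.asIdeal.zero_mem hq⟩
  add_mem' := by
    rintro x y ⟨m, hm⟩ ⟨n, hn⟩
    refine ⟨max m n, fun q hq => ?_⟩
    by_cases hx : x ∈ q.1.asIdeal
    · exact pow_eq_zero_of_le (le_max_right m n)
        (hn q fun hy => hq (q.1.asIdeal.add_mem hx hy))
    · exact pow_eq_zero_of_le (le_max_left m n) (hm q hx)
  smul_mem' := by
    rintro c x ⟨n, hn⟩
    exact ⟨n, fun q hq => hn q fun hx => hq (q.1.asIdeal.mul_mem_left c hx)⟩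

theorem isDiffIdeal_nilpotentOnIdeal {M : DiffSpec d → Type*} [∀ p, MonoidWithZero (M p)]
    (f : ∀ p, M p) : IsDiffIdeal d (nilpotentOnIdeal f) := by
  rintro i x ⟨n, hn⟩
  exact ⟨n, fun q hq => hn q fun hx => hq (q.2 i x hx)⟩

end NilpotentOn

theorem exists_mem_nilpotentOnIdeal_notMem {R A : Type*} [CommRing R] [CommRing A] [Algebra R A]
    {k : ℕ} {δ : Fin k → Derivation R A A} (hK : IsKeigher (fun i => ⇑(δ i)))
    (π : ∀ p : DiffSpec (fun i => ⇑(δ i)),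
      Localization.AtPrime p.1.asIdeal →+* FractionRing (A ⧸ p.1.asIdeal))
    (hπ : ∀ (p : DiffSpec (fun i => ⇑(δ i))) (a : A),
      π p (algebraMap A (Localization.AtPrime p.1.asIdeal) a) = resMap p a)
    {f : ∀ p : DiffSpec (fun i => ⇑(δ i)), Localization.AtPrime p.1.asIdeal}
    (hf : RegularLoc f) (hf0 : ∀ p, π p (f p) = 0) (p : DiffSpec (fun i => ⇑(δ i))) :
    ∃ g ∈ nilpotentOnIdeal f, g ∉ p.1.asIdeal := by
  obtain ⟨U, hU, hpU, a, b, hb, hfab⟩ := hf p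
  have ha : ∀ q ∈ U, a ∈ q.1.asIdeal := fun q hq => by
    rw [← resMap_eq_zero_iff, ← hπ, ← hfab q hq, map_mul, hf0, zero_mul]
  obtain ⟨g, hgp, hgU⟩ := DiffSpec.exists_basicOpen_subset hU hpU
  obtain ⟨n, hn⟩ : IsNilpotent (a * g) := hK.isNilpotent_of_forall_mem fun q => by
    by_cases hgq : g ∈ q.1.asIdeal
    · exact q.1.asIdeal.mul_mem_left a hgq
    · exact q.1.asIdeal.mul_mem_right g (ha q (hgU q hgq))
  refine ⟨g, ⟨n, fun q hgq => ?_⟩, hgp⟩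
  have hunit : IsUnit (algebraMap A (Localization.AtPrime q.1.asIdeal) (b * g)) :=
    IsLocalization.map_units _
      (⟨b * g, q.1.isPrime.mul_notMem (hb q (hgU q hgq)) hgq⟩ : q.1.asIdeal.primeCompl)
  refine (hunit.pow n).mul_left_eq_zero.1 ?_
  rw [← mul_pow, map_mul, ← mul_assoc, hfab q (hgU q hgq), ← map_mul, ← map_pow, hn, map_zero]

theorem stmt13_general {A : Type*} [CommRing A] {k : ℕ} (δ : Fin k → Derivation ℤ A A)
    (hK : IsKeigher (fun i => ⇑(δ i)))
    (π : ∀ p : DiffSpec (fun i => ⇑(δ i)),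
      Localization.AtPrime p.1.asIdeal →+* FractionRing (A ⧸ p.1.asIdeal))
    (hπ : ∀ (p : DiffSpec (fun i => ⇑(δ i))) (a : A),
      π p (algebraMap A (Localization.AtPrime p.1.asIdeal) a) = resMap p a)
    (f : ∀ p : DiffSpec (fun i => ⇑(δ i)), Localization.AtPrime p.1.asIdeal)
    (hf : RegularLoc f) :
    (∀ p, π p (f p) = 0) ↔ ∃ n : ℕ, ∀ p, f p ^ n = 0 := by
  constructor
  · intro hf0
    have htop : nilpotentOnIdeal f = ⊤ :=
      hK.eq_top_of_forall_not_le (isDiffIdeal_nilpotentOnIdeal f) fun p hle =>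
        let ⟨_, hg, hgp⟩ := exists_mem_nilpotentOnIdeal_notMem hK π hπ hf hf0 p
        hgp (hle hg)
    obtain ⟨n, hn⟩ : (1 : A) ∈ nilpotentOnIdeal f := htop ▸ Submodule.mem_top
    exact ⟨n, fun p => hn p p.1.asIdeal.one_notMem⟩
  · rintro ⟨n, hn⟩ p
    exact eq_zero_of_pow_eq_zero (n := n) (by rw [← map_pow, hn p, map_zero])

/-- For a Keigher ring `A`, the kernel of the reduction map
`φ(X) : O(X) → O'(X)` (reducing each value `f(p) ∈ A_p` modulo `p A_p`, i.e. applying the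
canonical map `π p : A_p → K(p)`) is exactly the nilradical of `O(X)`: a global section
`f` reduces to `0` iff some power of `f` vanishes. -/
theorem stmt13 {A : Type*} [CommRing A] {k : ℕ} (δ : Fin k → Derivation ℤ A A)
    (hcomm : ∀ i j a, δ i (δ j a) = δ j (δ i a))
    (hK : IsKeigher (fun i => ⇑(δ i)))
    (π : ∀ p : DiffSpec (fun i => ⇑(δ i)),
      Localization.AtPrime p.1.asIdeal →+* FractionRing (A ⧸ p.1.asIdeal))
    (hπ : ∀ (p : DiffSpec (fun i => ⇑(δ i))) (a : A),
      π p (algebraMap A (Localization.AtPrime p.1.asIdeal) a) = resMap p a)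
    (f : ∀ p : DiffSpec (fun i => ⇑(δ i)), Localization.AtPrime p.1.asIdeal)
    (hf : RegularLoc f) :
    (∀ p, π p (f p) = 0) ↔ ∃ n : ℕ, ∀ p, f p ^ n = 0 :=
  stmt13_general δ hK π hπ f hf
end
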